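/- Let (b,c) be a connected graph over (X,m), let w be a critical and non-trivial Hardy weight with ground state v, and let u ∈ 𝓕 with u ≥ 0 be subharmonic such that u/v is bounded. Then u = 0. -/

import Mathlib

/-!
Ground state transform: if `v' > 0` in `𝓕` solves `𝓛v' = w'v'`, then `w'` is a Hardy type
weight, by the discrete Green formula and the pointwise inequality
`(a - a')(s²/a - t²/a') ≤ (s - t)²` applied to `φ²/v'`.
For small `ε > 0` the function `v - εu` is positive with `𝓛(v - εu) ≥ w(v - εu)`, so
`𝓛(v - εu)/(v - εu)` is a Hardy weight above `w`; criticality forces equality, i.e. `𝓛u = wu`.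
Since `𝓛u ≤ 0 ≤ wu`, `u` is harmonic and vanishes where `w ≠ 0`, and the minimum principle on
the connected graph spreads this zero everywhere.
-/

open Filter MeasureTheory Topology
open scoped ENNReal NNReal

noncomputable section

namespace HG

variable {X : Type*}

open scoped Classical

/-- `f` has finite support (membership in `C_c(X)`). -/
def FinSupp (f : X → ℝ) : Prop := (Function.support f).Finite

/-- Membership in `𝓕`. -/
def MemF (b : X → X → ℝ) (f : X → ℝ) : Prop :=
  ∀ x : X, Summable fun y => b x y * |f y|

/-- The formal Laplacian `𝓛`. -/
def lap (b : X → X → ℝ) (c m : X → ℝ) (f : X → ℝ) (x : X) : ℝ :=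
  (1 / m x) * ∑' y, b x y * (f x - f y) + (c x / m x) * f x

/-- The energy form `𝓠`, valued in `ℝ≥0∞`. -/
def energy (b : X → X → ℝ) (c : X → ℝ) (f : X → ℝ) : ℝ≥0∞ :=
  (1 / 2) * ∑' x, ∑' y, ENNReal.ofReal (b x y * (f x - f y) ^ 2)
    + ∑' x, ENNReal.ofReal (c x * f x ^ 2)

/-- Membership in `𝓓`, the functions of finite energy. -/
def MemD (b : X → X → ℝ) (c : X → ℝ) (f : X → ℝ) : Prop := energy b c f < ⊤

/-- Membership in `𝓓₀`, the closure of `C_c(X)` w.r.t. `‖f‖_o = (𝓠(f)+f(o)²)^{1/2}`. -/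
def MemD0 (b : X → X → ℝ) (c : X → ℝ) (o : X) (f : X → ℝ) : Prop :=
  ∃ φ : ℕ → X → ℝ, (∀ n, FinSupp (φ n)) ∧
    Tendsto (fun n => energy b c (fun x => f x - φ n x)
      + ENNReal.ofReal ((f o - φ n o) ^ 2)) atTop (nhds 0)

/-- `(b,c)` is a connected graph over `(X,m)`. -/
structure IsGraph (b : X → X → ℝ) (c m : X → ℝ) : Prop where
  symm : ∀ x y, b x y = b y x
  nonneg : ∀ x y, 0 ≤ b x y
  loopless : ∀ x, b x x = 0
  deg_summable : ∀ x, Summable fun y => b x y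
  c_nonneg : ∀ x, 0 ≤ c x
  m_pos : ∀ x, 0 < m x
  connected : ∀ x y : X, ∃ (k : ℕ) (p : ℕ → X), p 0 = x ∧ p k = y ∧
    ∀ i < k, 0 < b (p i) (p (i + 1))

/-- `u` is superharmonic: `u ∈ 𝓕` and `𝓛u ≥ 0`. -/
def Superharmonic (b : X → X → ℝ) (c m : X → ℝ) (u : X → ℝ) : Prop :=
  MemF b u ∧ ∀ x, 0 ≤ lap b c m u x

/-- `u` is subharmonic: `u ∈ 𝓕` and `𝓛u ≤ 0`. -/
def Subharmonic (b : X → X → ℝ) (c m : X → ℝ) (u : X → ℝ) : Prop :=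
  MemF b u ∧ ∀ x, lap b c m u x ≤ 0

/-- The Green operator `Gk(x) = ∑_y G(x,y) k(y)`. -/
def Gop (G : X → X → ℝ) (k : X → ℝ) (x : X) : ℝ := ∑' y, G x y * k y

/-- Membership in `𝓖`, the domain of the Green operator. -/
def MemG (G : X → X → ℝ) (k : X → ℝ) : Prop :=
  ∀ x, Summable fun y => G x y * |k y|

/-- `u` is a potential: `u ∈ 𝓕`, `𝓛u ∈ 𝓖` and `u = G𝓛u`. -/
def IsPotential (b : X → X → ℝ) (c m : X → ℝ) (G : X → X → ℝ) (u : X → ℝ) : Prop :=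
  MemF b u ∧ MemG G (lap b c m u) ∧ u = Gop G (lap b c m u)

/-- Membership in `𝓖₂ = {k ∈ 𝓖 : ∑_x m(x)|k(x)| (G|k|)(x) < ∞}`. -/
def MemG2 (m : X → ℝ) (G : X → X → ℝ) (k : X → ℝ) : Prop :=
  MemG G k ∧ Summable fun x => m x * |k x| * Gop G (fun y => |k y|) x

/-- `G` is the Green function of the (transient) graph `(b,c)` over `(X,m)`:
for every `y`, `G(·,y)` is the unique function in `𝓓₀ ∩ 𝓕` with `𝓛 G(·,y) = 1_y`;
it is strictly positive and symmetric. -/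
structure IsGreen (b : X → X → ℝ) (c m : X → ℝ) (o : X) (G : X → X → ℝ) : Prop where
  pos : ∀ x y, 0 < G x y
  symm : ∀ x y, G x y = G y x
  memF : ∀ y, MemF b fun x => G x y
  memD0 : ∀ y, MemD0 b c o fun x => G x y
  lap_eq : ∀ y x, lap b c m (fun z => G z y) x = if x = y then 1 else 0
  unique : ∀ (y : X) (u : X → ℝ), MemF b u → MemD0 b c o u →
    (∀ x, lap b c m u x = if x = y then 1 else 0) → u = fun x => G x y

/-- `w(φ) = ∑_x m(x) w(x) φ(x)²`. -/
def wsum (m w φ : X → ℝ) : ℝ := ∑' x, m x * w x * φ x ^ 2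

/-- `w` is a Hardy type weight: `𝓠(φ) ≥ ∑_x m(x) w(x) φ(x)²` for all `φ ∈ C_c(X)`. -/
def IsHardyType (b : X → X → ℝ) (c m w : X → ℝ) : Prop :=
  ∀ φ : X → ℝ, FinSupp φ → ENNReal.ofReal (wsum m w φ) ≤ energy b c φ

/-- `w` is a Hardy weight: a non-negative Hardy type weight. -/
def IsHardy (b : X → X → ℝ) (c m w : X → ℝ) : Prop :=
  (∀ x, 0 ≤ w x) ∧ IsHardyType b c m w

/-- A Hardy weight is critical if the only Hardy weight above it is itself. -/
def IsCriticalHardy (b : X → X → ℝ) (c m w : X → ℝ) : Prop :=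
  IsHardy b c m w ∧ ∀ w', IsHardy b c m w' → (∀ x, w x ≤ w' x) → w' = w

/-- A Hardy type weight is critical if the only Hardy type weight above it is itself. -/
def IsCriticalHardyType (b : X → X → ℝ) (c m w : X → ℝ) : Prop :=
  IsHardyType b c m w ∧ ∀ w', IsHardyType b c m w' → (∀ x, w x ≤ w' x) → w' = w

/-- A ground state of `w`: a strictly positive `v ∈ 𝓕` with `𝓛v = wv`. -/
def IsGroundState (b : X → X → ℝ) (c m w v : X → ℝ) : Prop :=
  MemF b v ∧ (∀ x, 0 < v x) ∧ ∀ x, lap b c m v x = w x * v x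

/-- A ground state of `w` obtained as pointwise limit of a null sequence. -/
def IsGroundStateSeq (b : X → X → ℝ) (c m w v : X → ℝ) : Prop :=
  IsGroundState b c m w v ∧
  ∃ e : ℕ → X → ℝ, (∀ n, FinSupp (e n)) ∧
    Tendsto (fun n => (energy b c (e n)).toReal - wsum m w (e n)) atTop (nhds 0) ∧
    ∀ x, Tendsto (fun n => e n x) atTop (nhds (v x))

/-- Membership in `C₀(X)`, functions vanishing at infinity. -/
def MemC0 (f : X → ℝ) : Prop := ∀ ε : ℝ, 0 < ε → {x | ε ≤ |f x|}.Finite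

lemma _root_.ENNReal.ofReal_tsum_le_tsum_ofReal {ι : Type*} {f : ι → ℝ} (hf : Summable f) :
    ENNReal.ofReal (∑' i, f i) ≤ ∑' i, ENNReal.ofReal (f i) := by
  have hpos : Summable fun i => max (f i) 0 :=
    hf.abs.of_nonneg_of_le (fun _ => le_max_right _ _) fun _ =>
      max_le (le_abs_self _) (abs_nonneg _)
  calc ENNReal.ofReal (∑' i, f i)
      ≤ ENNReal.ofReal (∑' i, max (f i) 0) :=
        ENNReal.ofReal_le_ofReal (hf.tsum_le_tsum (fun _ => le_max_left _ _) hpos)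
    _ = ∑' i, ENNReal.ofReal (max (f i) 0) :=
        ENNReal.ofReal_tsum_of_nonneg (fun _ => le_max_right _ _) hpos
    _ = ∑' i, ENNReal.ofReal (f i) := by
        simp only [ENNReal.ofReal_max, ENNReal.ofReal_zero, max_zero]

lemma mul_sub_sq_div_sub_le_sq {a a' s t : ℝ} (ha : 0 < a) (ha' : 0 < a') :
    (a - a') * (s ^ 2 / a - t ^ 2 / a') ≤ (s - t) ^ 2 := by
  have key : (s - t) ^ 2 - (a - a') * (s ^ 2 / a - t ^ 2 / a')
      = (a * t - a' * s) ^ 2 / (a * a') := by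
    field_simp
    ring
  nlinarith [key, show 0 ≤ (a * t - a' * s) ^ 2 / (a * a') by positivity]

section Graph

variable {b : X → X → ℝ} {c m : X → ℝ}

lemma MemF.summable_mul (hb : ∀ x y, 0 ≤ b x y) {f : X → ℝ} (hf : MemF b f) (x : X) :
    Summable fun y => b x y * f y :=
  .of_abs <| (hf x).congr fun y => by rw [abs_mul, abs_of_nonneg (hb x y)]

lemma MemF.sub_const_mul (hb : ∀ x y, 0 ≤ b x y) {f g : X → ℝ} (hf : MemF b f)
    (hg : MemF b g) (t : ℝ) : MemF b fun x => f x - t * g x := by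
  intro x
  refine ((hf x).add ((hg x).mul_left |t|)).of_nonneg_of_le
    (fun y => mul_nonneg (hb x y) (abs_nonneg _)) fun y => ?_
  calc b x y * |f y - t * g y| ≤ b x y * (|f y| + |t| * |g y|) := by
        gcongr
        · exact hb x y
        · exact (abs_sub _ _).trans_eq (by rw [abs_mul])
    _ = b x y * |f y| + |t| * (b x y * |g y|) := by ring

lemma IsGraph.summable_mul_sub (hg : IsGraph b c m) {f : X → ℝ} (hf : MemF b f) (x : X) :
    Summable fun y => b x y * (f x - f y) :=
  (((hg.deg_summable x).mul_right (f x)).sub (hf.summable_mul hg.nonneg x)).congr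
    fun _ => (mul_sub _ _ _).symm

lemma IsGraph.mul_lap (hg : IsGraph b c m) (f : X → ℝ) (x : X) :
    m x * lap b c m f x = ∑' y, b x y * (f x - f y) + c x * f x := by
  simp only [lap]
  field_simp [(hg.m_pos x).ne']

lemma IsGraph.lap_sub_const_mul (hg : IsGraph b c m) {f g : X → ℝ} (hf : MemF b f)
    (hgF : MemF b g) (t : ℝ) (x : X) :
    lap b c m (fun x => f x - t * g x) x = lap b c m f x - t * lap b c m g x := by
  have hsum : ∑' y, b x y * (f x - t * g x - (f y - t * g y))
      = ∑' y, b x y * (f x - f y) - t * ∑' y, b x y * (g x - g y) := by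
    rw [← tsum_mul_left, ← (hg.summable_mul_sub hf x).tsum_sub
      ((hg.summable_mul_sub hgF x).mul_left t)]
    exact tsum_congr fun y => by ring
  simp only [lap, hsum]
  ring

lemma IsGraph.hasSum_green (hg : IsGraph b c m) {v g : X → ℝ} (hv : MemF b v)
    {S : Finset X} (hgS : ∀ x ∉ S, g x = 0) :
    HasSum (fun p : X × X => b p.1 p.2 * (v p.1 - v p.2) * (g p.1 - g p.2))
      (2 * ∑ x ∈ S, g x * ∑' y, b x y * (v x - v y)) := by
  set F : X × X → ℝ := fun p => g p.1 * (b p.1 p.2 * (v p.1 - v p.2))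
  have hrow : ∀ x, Summable fun y => F (x, y) := fun x =>
    (hg.summable_mul_sub hv x).mul_left (g x)
  have hF_zero : ∀ x ∉ S, ∀ y, F (x, y) = 0 := fun x hx y => by simp [F, hgS x hx]
  have hF : Summable F := by
    refine .of_abs ((summable_prod_of_nonneg fun _ => abs_nonneg _).2 ⟨fun x => (hrow x).abs, ?_⟩)
    exact summable_of_ne_finset_zero (s := S) fun x hx => by simp [hF_zero x hx]
  have hF_tsum : ∑' p, F p = ∑ x ∈ S, g x * ∑' y, b x y * (v x - v y) := by
    rw [hF.tsum_prod' hrow, tsum_eq_sum fun x hx => by simp [hF_zero x hx]]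
    exact Finset.sum_congr rfl fun x _ => tsum_mul_left (a := g x)
  have hF_swap : HasSum (fun p : X × X => F p.swap) (∑' p, F p) :=
    (Equiv.prodComm X X).hasSum_iff.2 hF.hasSum
  rw [two_mul, ← hF_tsum]
  refine (hF.hasSum.add hF_swap).congr_fun fun ⟨x, y⟩ => ?_
  simp only [F, Prod.swap_prod_mk, hg.symm y x]
  ring

lemma IsGraph.isHardyType_of_lap_eq_mul (hg : IsGraph b c m) {v w : X → ℝ} (hv : MemF b v)
    (hv_pos : ∀ x, 0 < v x) (hlap : ∀ x, lap b c m v x = w x * v x) : IsHardyType b c m w := by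
  intro φ hφ
  set S := hφ.toFinset
  have hφS : ∀ x ∉ S, φ x = 0 := fun x hx =>
    not_not.1 fun h => hx (hφ.mem_toFinset.2 h)
  set g : X → ℝ := fun x => φ x ^ 2 / v x
  have hgS : ∀ x ∉ S, g x = 0 := fun x hx => by simp [g, hφS x hx]
  have hpoint : ∀ x, m x * w x * φ x ^ 2
      = g x * ∑' y, b x y * (v x - v y) + c x * φ x ^ 2 := by
    intro x
    have hgv : g x * v x = φ x ^ 2 := div_mul_cancel₀ _ (hv_pos x).ne'
    calc m x * w x * φ x ^ 2 = g x * (m x * (w x * v x)) := by rw [← hgv]; ring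
      _ = g x * ∑' y, b x y * (v x - v y) + c x * (g x * v x) := by rw [← hlap, hg.mul_lap]; ring
      _ = _ := by rw [hgv]
  have hwsum : wsum m w φ
      = ∑ x ∈ S, g x * ∑' y, b x y * (v x - v y) + ∑ x ∈ S, c x * φ x ^ 2 := by
    rw [wsum, tsum_eq_sum (s := S) fun x hx => by simp [hφS x hx], ← Finset.sum_add_distrib]
    exact Finset.sum_congr rfl fun x _ => hpoint x
  have hgreen := hg.hasSum_green hv hgS
  have hfirst : ENNReal.ofReal (∑ x ∈ S, g x * ∑' y, b x y * (v x - v y))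
      ≤ 1 / 2 * ∑' x, ∑' y, ENNReal.ofReal (b x y * (φ x - φ y) ^ 2) := by
    calc ENNReal.ofReal (∑ x ∈ S, g x * ∑' y, b x y * (v x - v y))
        = ENNReal.ofReal (1 / 2) * ENNReal.ofReal
            (∑' p : X × X, b p.1 p.2 * (v p.1 - v p.2) * (g p.1 - g p.2)) := by
          rw [← ENNReal.ofReal_mul (by norm_num), hgreen.tsum_eq]
          ring_nf
      _ ≤ 1 / 2 * ∑' p : X × X, ENNReal.ofReal (b p.1 p.2 * (φ p.1 - φ p.2) ^ 2) := by
          rw [ENNReal.ofReal_div_of_pos two_pos, ENNReal.ofReal_one, ENNReal.ofReal_ofNat]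
          gcongr
          refine (ENNReal.ofReal_tsum_le_tsum_ofReal hgreen.summable).trans
            (ENNReal.tsum_le_tsum fun p => ENNReal.ofReal_le_ofReal ?_)
          rw [mul_assoc]
          exact mul_le_mul_of_nonneg_left
            (mul_sub_sq_div_sub_le_sq (hv_pos p.1) (hv_pos p.2)) (hg.nonneg _ _)
      _ = _ := by rw [ENNReal.tsum_prod']
  have hsecond : ENNReal.ofReal (∑ x ∈ S, c x * φ x ^ 2)
      ≤ ∑' x, ENNReal.ofReal (c x * φ x ^ 2) := by
    rw [ENNReal.ofReal_sum_of_nonneg fun x _ => mul_nonneg (hg.c_nonneg x) (sq_nonneg _)]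
    exact ENNReal.sum_le_tsum S
  rw [hwsum, energy]
  exact ENNReal.ofReal_add_le.trans (add_le_add hfirst hsecond)

lemma Superharmonic.eq_zero_of_adj (hg : IsGraph b c m) {u : X → ℝ}
    (hu : Superharmonic b c m u) (hu_nonneg : ∀ x, 0 ≤ u x) {x y : X} (hx : u x = 0)
    (hxy : 0 < b x y) : u y = 0 := by
  have htsum : ∑' z, b x z * u z ≤ 0 := by
    have := mul_nonneg (hg.m_pos x).le (hu.2 x)
    simpa only [hg.mul_lap, hx, zero_sub, mul_neg, tsum_neg, mul_zero, add_zero,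
      neg_nonneg] using this
  have hterm : b x y * u y ≤ 0 :=
    ((hu.1.summable_mul hg.nonneg x).le_tsum y fun z _ =>
      mul_nonneg (hg.nonneg x z) (hu_nonneg z)).trans htsum
  exact le_antisymm (nonpos_of_mul_nonpos_right hterm hxy) (hu_nonneg y)

lemma Superharmonic.eq_zero_of_nonneg (hg : IsGraph b c m) {u : X → ℝ}
    (hu : Superharmonic b c m u) (hu_nonneg : ∀ x, 0 ≤ u x) {x₀ : X} (hx₀ : u x₀ = 0) :
    u = 0 := by
  funext x
  obtain ⟨k, p, hp0, hpk, hpath⟩ := hg.connected x₀ x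
  have hvanish : ∀ i ≤ k, u (p i) = 0 := by
    intro i
    induction i with
    | zero => exact fun _ => hp0 ▸ hx₀
    | succ i ih => exact fun hi =>
        hu.eq_zero_of_adj hg hu_nonneg (ih (by omega)) (hpath i (by omega))
  exact hpk ▸ hvanish k le_rfl

variable {w : X → ℝ}

lemma IsCriticalHardy.lap_eq_mul_of_le (hg : IsGraph b c m) (hcrit : IsCriticalHardy b c m w)
    {v : X → ℝ} (hv : MemF b v) (hv_pos : ∀ x, 0 < v x)
    (hle : ∀ x, w x * v x ≤ lap b c m v x) (x : X) : lap b c m v x = w x * v x := by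
  set w' : X → ℝ := fun x => lap b c m v x / v x
  have hw' : ∀ x, lap b c m v x = w' x * v x := fun x => (div_mul_cancel₀ _ (hv_pos x).ne').symm
  have hww' : ∀ x, w x ≤ w' x := fun x => (le_div_iff₀ (hv_pos x)).2 (hle x)
  have hw'_hardy : IsHardy b c m w' :=
    ⟨fun x => (hcrit.1.1 x).trans (hww' x), hg.isHardyType_of_lap_eq_mul hv hv_pos hw'⟩
  rw [hw' x, hcrit.2 w' hw'_hardy hww']

lemma IsCriticalHardy.lap_eq_mul_of_subharmonic (hg : IsGraph b c m)
    (hcrit : IsCriticalHardy b c m w) {v u : X → ℝ} (hv : IsGroundState b c m w v)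
    (hu : Subharmonic b c m u) (hu_nonneg : ∀ x, 0 ≤ u x) {ε : ℝ} (hε : 0 < ε)
    (hεu : ∀ x, ε * u x < v x) (x : X) : lap b c m u x = w x * u x := by
  obtain ⟨hvF, -, hv_lap⟩ := hv
  have hlap := hg.lap_sub_const_mul hvF hu.1 ε
  have hsuper := hcrit.lap_eq_mul_of_le hg (hvF.sub_const_mul hg.nonneg hu.1 ε)
    (fun x => sub_pos.2 (hεu x)) fun x => by
      rw [hlap, hv_lap]
      nlinarith [hu.2 x, mul_nonneg (hcrit.1.1 x) (hu_nonneg x)]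
  have := hsuper x
  rw [hlap, hv_lap] at this
  exact mul_left_cancel₀ hε.ne' (by linarith)

end Graph

theorem stmt13_general {X : Type*} (b : X → X → ℝ) (c m : X → ℝ)
    (hg : IsGraph b c m)
    (w : X → ℝ) (hnt : w ≠ 0)
    (hcrit : IsCriticalHardy b c m w)
    (v : X → ℝ) (hv : IsGroundState b c m w v)
    (u : X → ℝ) (hu : Subharmonic b c m u) (hupos : ∀ x, 0 ≤ u x)
    (hbdd : ∃ C : ℝ, ∀ x, u x / v x ≤ C) :
    u = 0 := by
  obtain ⟨C, hC⟩ := hbdd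
  have hεu : ∀ x, (|C| + 1)⁻¹ * u x < v x := fun x => by
    have hux : u x ≤ C * v x := (div_le_iff₀ (hv.2.1 x)).1 (hC x)
    rw [inv_mul_lt_iff₀ (by positivity)]
    nlinarith [le_abs_self C, hv.2.1 x]
  have hu_lap := hcrit.lap_eq_mul_of_subharmonic hg hv hu hupos (by positivity) hεu
  have hwu : ∀ x, w x * u x = 0 := fun x =>
    le_antisymm (hu_lap x ▸ hu.2 x) (mul_nonneg (hcrit.1.1 x) (hupos x))
  obtain ⟨x₀, hx₀⟩ := Function.ne_iff.1 hnt
  refine Superharmonic.eq_zero_of_nonneg hg ⟨hu.1, fun x => ?_⟩ hupos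
    ((mul_eq_zero.1 (hwu x₀)).resolve_left hx₀)
  rw [hu_lap, hwu]

/-- Lemma 3.6. Let `w` be a critical non-trivial Hardy weight
with ground state `v`, and let `u ∈ 𝓕`, `u ≥ 0`, be subharmonic with `u/v`
bounded. Then `u = 0`. -/
theorem stmt13 {X : Type*} [Countable X] (b : X → X → ℝ) (c m : X → ℝ)
    (hg : IsGraph b c m)
    (w : X → ℝ) (hw : ∀ x, 0 ≤ w x) (hnt : w ≠ 0)
    (hcrit : IsCriticalHardy b c m w)
    (v : X → ℝ) (hv : IsGroundState b c m w v)
    (u : X → ℝ) (hu : Subharmonic b c m u) (hupos : ∀ x, 0 ≤ u x)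
    (hbdd : ∃ C : ℝ, ∀ x, u x / v x ≤ C) :
    u = 0 :=
  stmt13_general b c m hg w hnt hcrit v hv u hu hupos hbdd

end HG
end
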